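/- arXiv:2512.03321 — 2 statements merged into one kernel-verified Lean document; each statement's English description precedes it below -/
import Mathlib

section
/- Let Σ_ρ = (1-ρ)I_p + ρ·1_p 1_p^T with 0 ≤ ρ < 1 and S ⊆ {1,…,p} with |S| = s ≥ 1. For every v ∈ ℝ^p with ‖v_S‖₁ = 1, it holds that s·v^T Σ_ρ v ≥ 1 - ρ. In other words, the squared compatibility constant of Σ_ρ is at least 1 - ρ. -/
open Matrix BigOperators Finset

/-! The quadratic form of `Σ_ρ` is `(1 - ρ)‖v‖₂² + ρ (∑ᵢ vᵢ)²`. The second term is nonnegative,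
and Cauchy–Schwarz on `S` gives `1 = ‖v_S‖₁² ≤ s ‖v_S‖₂² ≤ s ‖v‖₂²`. -/

section Equicorrelation

variable {n : Type*} [Fintype n]

theorem dotProduct_mulVec_of_one (v : n → ℝ) :
    v ⬝ᵥ (Matrix.of (fun _ _ => (1 : ℝ)) *ᵥ v) = (∑ i, v i) ^ 2 := by
  simp only [dotProduct, mulVec, of_apply, one_mul, ← Finset.sum_mul]
  ring

theorem dotProduct_mulVec_equicorrelation [DecidableEq n] (ρ : ℝ) (v : n → ℝ) :
    v ⬝ᵥ (((1 - ρ) • (1 : Matrix n n ℝ) + ρ • Matrix.of (fun _ _ => (1 : ℝ))) *ᵥ v)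
      = (1 - ρ) * ∑ i, v i ^ 2 + ρ * (∑ i, v i) ^ 2 := by
  rw [add_mulVec, smul_mulVec, smul_mulVec, one_mulVec, dotProduct_add, dotProduct_smul,
    dotProduct_smul, dotProduct_mulVec_of_one, smul_eq_mul, smul_eq_mul]
  simp only [dotProduct, sq]

end Equicorrelation

theorem sq_sum_abs_le_card_mul_sum_sq {n : Type*} [Fintype n] (S : Finset n) (v : n → ℝ) :
    (∑ j ∈ S, |v j|) ^ 2 ≤ #S * ∑ i, v i ^ 2 :=
  calc (∑ j ∈ S, |v j|) ^ 2 ≤ #S * ∑ j ∈ S, |v j| ^ 2 := sq_sum_le_card_mul_sum_sq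
    _ = #S * ∑ j ∈ S, v j ^ 2 := by simp only [sq_abs]
    _ ≤ #S * ∑ i, v i ^ 2 := by
      gcongr _ * ?_
      exact sum_le_sum_of_subset_of_nonneg (subset_univ S) fun i _ _ => sq_nonneg (v i)

theorem stmt_9_general (p : ℕ) (ρ : ℝ) (hρ0 : 0 ≤ ρ) (hρ1 : ρ < 1)
    (S : Finset (Fin p)) (s : ℕ) (hs : s = S.card)
    (v : Fin p → ℝ) (hv : (∑ j ∈ S, |v j|) = 1) :
    1 - ρ ≤ (s : ℝ) * (v ⬝ᵥ (((1 - ρ) • (1 : Matrix (Fin p) (Fin p) ℝ) +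
        ρ • Matrix.of (fun _ _ => (1 : ℝ))).mulVec v)) := by
  rw [dotProduct_mulVec_equicorrelation]
  have h_cs : 1 ≤ (s : ℝ) * ∑ i, v i ^ 2 := by
    simpa [hv, hs] using sq_sum_abs_le_card_mul_sum_sq S v
  have h_rank_one : 0 ≤ (s : ℝ) * (ρ * (∑ i, v i) ^ 2) := by positivity
  have h_scaled := mul_le_mul_of_nonneg_left h_cs (sub_nonneg.mpr hρ1.le)
  linarith

theorem stmt_9 (p : ℕ) (hp : 1 ≤ p) (ρ : ℝ) (hρ0 : 0 ≤ ρ) (hρ1 : ρ < 1)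
    (S : Finset (Fin p)) (hS : S.Nonempty) (s : ℕ) (hs : s = S.card)
    (v : Fin p → ℝ) (hv : (∑ j ∈ S, |v j|) = 1) :
    1 - ρ ≤ (s : ℝ) * (v ⬝ᵥ (((1 - ρ) • (1 : Matrix (Fin p) (Fin p) ℝ) +
        ρ • Matrix.of (fun _ _ => (1 : ℝ))).mulVec v)) :=
  stmt_9_general p ρ hρ0 hρ1 S s hs v hv
end

section
/- Let Σ_ρ = (1-ρ)I_p + ρ·1_p 1_p^T with 0 ≤ ρ < 1 and let S ⊆ {1,…,p} have odd cardinality s ≥ 1 with r := p - s ≥ 1. Then there exists v ∈ ℝ^p with ‖v_S‖₁ = 1, ‖v_{S^c}‖₁ ≤ 3, and s·v^T Σ_ρ v = (1-ρ)(1 + 1/(s r)). Hence the squared compatibility constant satisfies φ² ≤ (1-ρ)(1 + 1/(s r)). -/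
/-!
Split `S` into `A` with `(s + 1) / 2` elements and `S \ A` with `(s - 1) / 2` (this is where `s`
odd enters), and take `v = 1/s` on `A`, `-1/s` on `S \ A` and `-1/(s r)` off `S`. Then
`‖v_S‖₁ = 1`, `‖v_{Sᶜ}‖₁ = 1/s`, and `∑ v = 0`, so the rank-one part `ρ (∑ v)²` of the quadratic
form vanishes and `s vᵀ Σ_ρ v = s (1 - ρ) ‖v‖₂² = (1 - ρ) (1 + 1/(s r))`. The infimum bound
follows because the constraint set is compact, so the quadratic form is bounded below on it.
-/

open Matrix BigOperators Finset

section Equicorrelation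

variable {ι : Type*} [Fintype ι] [DecidableEq ι]

def equicorrelation (ρ : ℝ) : Matrix ι ι ℝ :=
  (1 - ρ) • (1 : Matrix ι ι ℝ) + ρ • Matrix.of (fun _ _ => (1 : ℝ))

lemma dotProduct_equicorrelation_mulVec (ρ : ℝ) (v : ι → ℝ) :
    v ⬝ᵥ (equicorrelation ρ *ᵥ v) =
      (1 - ρ) * ∑ i, v i ^ 2 + ρ * (∑ i, v i) ^ 2 := by
  have hJ : Matrix.of (fun (_ _ : ι) => (1 : ℝ)) *ᵥ v = fun _ => ∑ i, v i := by
    ext; simp [mulVec, dotProduct]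
  rw [equicorrelation, add_mulVec, smul_mulVec, smul_mulVec, one_mulVec, hJ, dotProduct_add,
    dotProduct_smul, dotProduct_smul, smul_eq_mul, smul_eq_mul]
  simp only [dotProduct, sq, Finset.sum_mul]

lemma isCompact_setOf_sum_abs (S : Finset ι) (c : ℝ) :
    IsCompact {v : ι → ℝ | ∑ j ∈ S, |v j| = 1 ∧ ∑ j ∈ Sᶜ, |v j| ≤ c} := by
  refine Metric.isCompact_of_isClosed_isBounded ?_ ?_
  · have hS : Continuous fun v : ι → ℝ => ∑ j ∈ S, |v j| := by fun_prop
    have hSc : Continuous fun v : ι → ℝ => ∑ j ∈ Sᶜ, |v j| := by fun_prop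
    exact (isClosed_eq hS continuous_const).inter (isClosed_le hSc continuous_const)
  · refine (Metric.isBounded_iff_subset_closedBall 0).2 ⟨1 + c, fun v ⟨hS, hSc⟩ => ?_⟩
    have hc : 0 ≤ c := (sum_nonneg fun j _ => abs_nonneg (v j)).trans hSc
    rw [mem_closedBall_zero_iff, pi_norm_le_iff_of_nonneg (by linarith)]
    intro i
    calc ‖v i‖ = |v i| := Real.norm_eq_abs _
      _ ≤ ∑ j, |v j| := single_le_sum (fun j _ => abs_nonneg (v j)) (mem_univ i)
      _ = ∑ j ∈ S, |v j| + ∑ j ∈ Sᶜ, |v j| := (sum_add_sum_compl S _).symm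
      _ ≤ 1 + c := by linarith

end Equicorrelation

section Witness

variable {ι : Type*} [Fintype ι] [DecidableEq ι] {S A : Finset ι}

noncomputable def compatibilityWitness (S A : Finset ι) : ι → ℝ := fun j =>
  if j ∈ A then (#S : ℝ)⁻¹ else if j ∈ S then -(#S : ℝ)⁻¹ else -((#S : ℝ) * #Sᶜ)⁻¹

lemma abs_compatibilityWitness_of_mem {j : ι} (hj : j ∈ S) :
    |compatibilityWitness S A j| = (#S : ℝ)⁻¹ := by
  unfold compatibilityWitness
  split_ifs <;> simp

lemma compatibilityWitness_of_mem {j : ι} (hj : j ∈ A) :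
    compatibilityWitness S A j = (#S : ℝ)⁻¹ := if_pos hj

lemma compatibilityWitness_of_mem_sdiff {j : ι} (hj : j ∈ S \ A) :
    compatibilityWitness S A j = -(#S : ℝ)⁻¹ := by
  simp [compatibilityWitness, (mem_sdiff.1 hj).1, (mem_sdiff.1 hj).2]

lemma compatibilityWitness_of_notMem (hAS : A ⊆ S) {j : ι} (hj : j ∉ S) :
    compatibilityWitness S A j = -((#S : ℝ) * #Sᶜ)⁻¹ := by
  have hjA : j ∉ A := fun h => hj (hAS h)
  simp [compatibilityWitness, hj, hjA]

lemma sum_abs_compatibilityWitness (hS : S.Nonempty) :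
    ∑ j ∈ S, |compatibilityWitness S A j| = 1 := by
  rw [sum_congr rfl fun j => abs_compatibilityWitness_of_mem, sum_const, nsmul_eq_mul,
    mul_inv_cancel₀ (by simpa using hS.ne_empty)]

lemma sum_abs_compl_compatibilityWitness (hAS : A ⊆ S) (hSc : Sᶜ.Nonempty) :
    ∑ j ∈ Sᶜ, |compatibilityWitness S A j| = (#S : ℝ)⁻¹ := by
  have hSc' : (#Sᶜ : ℝ) ≠ 0 := by simpa using hSc.ne_empty
  rw [sum_congr rfl fun j hj => by rw [compatibilityWitness_of_notMem hAS (mem_compl.1 hj)],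
    sum_const, nsmul_eq_mul, abs_neg, abs_inv, abs_mul, Nat.abs_cast, Nat.abs_cast]
  field_simp

lemma sum_compatibilityWitness (hAS : A ⊆ S) (hA : 2 * #A = #S + 1) (hSc : Sᶜ.Nonempty) :
    ∑ j, compatibilityWitness S A j = 0 := by
  have hS : (#S : ℝ) ≠ 0 := Nat.cast_ne_zero.2 (by omega)
  have hSc' : (#Sᶜ : ℝ) ≠ 0 := by simpa using hSc.ne_empty
  have hsign : (#A : ℝ) - #(S \ A) = 1 := by
    rw [card_sdiff_of_subset hAS, Nat.cast_sub (card_le_card hAS)]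
    have : (2 * #A : ℝ) = #S + 1 := by exact_mod_cast hA
    linarith
  have hsumS : ∑ j ∈ S, compatibilityWitness S A j = (#S : ℝ)⁻¹ := by
    rw [← sum_sdiff hAS,
      sum_congr rfl fun j => compatibilityWitness_of_mem_sdiff,
      sum_congr rfl fun j => compatibilityWitness_of_mem, sum_const, sum_const, nsmul_eq_mul,
      nsmul_eq_mul, mul_neg, ← sub_eq_neg_add, ← sub_mul, hsign, one_mul]
  rw [← sum_add_sum_compl S, hsumS,
    sum_congr rfl fun j hj => compatibilityWitness_of_notMem hAS (mem_compl.1 hj),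
    sum_const, nsmul_eq_mul]
  field_simp
  ring

lemma sum_sq_compatibilityWitness (hAS : A ⊆ S) :
    ∑ j, compatibilityWitness S A j ^ 2 =
      #S * ((#S : ℝ)⁻¹) ^ 2 + #Sᶜ * (((#S : ℝ) * #Sᶜ)⁻¹) ^ 2 := by
  rw [← sum_add_sum_compl S,
    sum_congr rfl fun j hj => (by rw [← sq_abs, abs_compatibilityWitness_of_mem hj] :
      compatibilityWitness S A j ^ 2 = ((#S : ℝ)⁻¹) ^ 2),
    sum_congr rfl fun j hj => (by rw [compatibilityWitness_of_notMem hAS (mem_compl.1 hj), neg_sq] :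
      compatibilityWitness S A j ^ 2 = (((#S : ℝ) * #Sᶜ)⁻¹) ^ 2),
    sum_const, sum_const, nsmul_eq_mul, nsmul_eq_mul]

lemma card_mul_dotProduct_equicorrelation_compatibilityWitness (ρ : ℝ) (hAS : A ⊆ S)
    (hA : 2 * #A = #S + 1) (hSc : Sᶜ.Nonempty) :
    #S * (compatibilityWitness S A ⬝ᵥ (equicorrelation ρ *ᵥ compatibilityWitness S A)) =
      (1 - ρ) * (1 + 1 / ((#S : ℝ) * #Sᶜ)) := by
  have hS : (#S : ℝ) ≠ 0 := Nat.cast_ne_zero.2 (by omega)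
  have hSc' : (#Sᶜ : ℝ) ≠ 0 := by simpa using hSc.ne_empty
  rw [dotProduct_equicorrelation_mulVec, sum_compatibilityWitness hAS hA hSc,
    sum_sq_compatibilityWitness hAS]
  field_simp
  ring

end Witness

theorem stmt_11_general (p : ℕ) (ρ : ℝ)
    (S : Finset (Fin p)) (s : ℕ) (hs : s = S.card) (hso : Odd s)
    (r : ℕ) (hr : r = p - s) (hr1 : 1 ≤ r) :
    (∃ v : Fin p → ℝ, (∑ j ∈ S, |v j|) = 1 ∧ (∑ j ∈ Sᶜ, |v j|) ≤ 3 ∧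
        (s : ℝ) * (v ⬝ᵥ (((1 - ρ) • (1 : Matrix (Fin p) (Fin p) ℝ) +
          ρ • Matrix.of (fun _ _ => (1 : ℝ))).mulVec v)) =
          (1 - ρ) * (1 + 1 / ((s : ℝ) * r))) ∧
    sInf ((fun v : Fin p → ℝ =>
        (s : ℝ) * (v ⬝ᵥ (((1 - ρ) • (1 : Matrix (Fin p) (Fin p) ℝ) +
          ρ • Matrix.of (fun _ _ => (1 : ℝ))).mulVec v))) ''
        {v | (∑ j ∈ S, |v j|) = 1 ∧ (∑ j ∈ Sᶜ, |v j|) ≤ 3}) ≤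
      (1 - ρ) * (1 + 1 / ((s : ℝ) * r)) := by
  obtain ⟨k, hk⟩ := hso
  have hS : 0 < #S := by omega
  obtain ⟨A, hAS, hA⟩ := exists_subset_card_eq (s := S) (n := k + 1) (by omega)
  have hSc : #Sᶜ = r := by rw [card_compl, Fintype.card_fin, ← hs, hr]
  have hScne : Sᶜ.Nonempty := card_pos.1 (by omega)
  have hvalue := card_mul_dotProduct_equicorrelation_compatibilityWitness ρ hAS (by omega) hScne
  rw [← hs, hSc] at hvalue
  have hmem : compatibilityWitness S A ∈
      {v : Fin p → ℝ | ∑ j ∈ S, |v j| = 1 ∧ ∑ j ∈ Sᶜ, |v j| ≤ 3} := by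
    refine ⟨sum_abs_compatibilityWitness (card_pos.1 hS), ?_⟩
    rw [sum_abs_compl_compatibilityWitness hAS hScne]
    exact (inv_le_one_of_one_le₀ (Nat.one_le_cast.2 hS)).trans (by norm_num)
  refine ⟨⟨_, hmem.1, hmem.2, hvalue⟩, csInf_le ?_ ⟨_, hmem, hvalue⟩⟩
  exact (isCompact_setOf_sum_abs S 3).bddBelow_image (Continuous.continuousOn (by fun_prop))

theorem stmt_11 (p : ℕ) (ρ : ℝ) (hρ0 : 0 ≤ ρ) (hρ1 : ρ < 1)
    (S : Finset (Fin p)) (s : ℕ) (hs : s = S.card) (hso : Odd s)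
    (hs1 : 1 ≤ s) (r : ℕ) (hr : r = p - s) (hr1 : 1 ≤ r) (hps : s < p) :
    (∃ v : Fin p → ℝ, (∑ j ∈ S, |v j|) = 1 ∧ (∑ j ∈ Sᶜ, |v j|) ≤ 3 ∧
        (s : ℝ) * (v ⬝ᵥ (((1 - ρ) • (1 : Matrix (Fin p) (Fin p) ℝ) +
          ρ • Matrix.of (fun _ _ => (1 : ℝ))).mulVec v)) =
          (1 - ρ) * (1 + 1 / ((s : ℝ) * r))) ∧
    sInf ((fun v : Fin p → ℝ =>
        (s : ℝ) * (v ⬝ᵥ (((1 - ρ) • (1 : Matrix (Fin p) (Fin p) ℝ) +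
          ρ • Matrix.of (fun _ _ => (1 : ℝ))).mulVec v))) ''
        {v | (∑ j ∈ S, |v j|) = 1 ∧ (∑ j ∈ Sᶜ, |v j|) ≤ 3}) ≤
      (1 - ρ) * (1 + 1 / ((s : ℝ) * r)) :=
  stmt_11_general p ρ S s hs hso r hr hr1
end
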